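/- Fix N ≥ 1, b ∈ ℝ, nonzero reals p_i, q_i with p_i⁻¹ ≠ b, q_i⁻¹ ≠ b, constants a_{i,1}, a_{i,2}, ξ_{i0}, η_{i0} ∈ ℝ, and let τ_n be the associated Casoratian. Then for every n ∈ ℤ: ∂_{x₋₁}τ_n − N·b·τ_n equals the determinant of the N×N matrix whose j-th column, for 1 ≤ j ≤ N−1, is (ψ_i^{(n+j−1)})_{i=1..N} and whose last column is (ψ_i^{(n+N)})_{i=1..N}; that is, (∂_{x₋₁} − Nb)τ_n = det[ψ^{(n)}, ψ^{(n+1)}, …, ψ^{(n+N−2)}, ψ^{(n+N)}]. -/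

import Mathlib

/-- Partial derivative in `x₁`. -/
noncomputable def pd1 (F : ℝ → ℝ → ℝ → ℝ → ℝ) : ℝ → ℝ → ℝ → ℝ → ℝ :=
  fun x1 x2 xm1 xm2 => deriv (fun t => F t x2 xm1 xm2) x1

/-- Partial derivative in `x₂`. -/
noncomputable def pd2 (F : ℝ → ℝ → ℝ → ℝ → ℝ) : ℝ → ℝ → ℝ → ℝ → ℝ :=
  fun x1 x2 xm1 xm2 => deriv (fun t => F x1 t xm1 xm2) x2

/-- Partial derivative in `x₋₁`. -/
noncomputable def pdm1 (F : ℝ → ℝ → ℝ → ℝ → ℝ) : ℝ → ℝ → ℝ → ℝ → ℝ :=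
  fun x1 x2 xm1 xm2 => deriv (fun t => F x1 x2 t xm2) xm1

/-- Partial derivative in `x₋₂`. -/
noncomputable def pdm2 (F : ℝ → ℝ → ℝ → ℝ → ℝ) : ℝ → ℝ → ℝ → ℝ → ℝ :=
  fun x1 x2 xm1 xm2 => deriv (fun t => F x1 x2 xm1 t) xm2

/-- The functions ψ_i^{(n)} of (x₁, x₂, x₋₁, x₋₂). -/
noncomputable def psi {N : ℕ} (b : ℝ) (p q a1 a2 ξ0 η0 : Fin N → ℝ)
    (i : Fin N) (n : ℤ) : ℝ → ℝ → ℝ → ℝ → ℝ :=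
  fun x1 x2 xm1 xm2 =>
    a1 i * ((p i)⁻¹ - b) ^ n *
      Real.exp (x1 / ((p i)⁻¹ - b) + x2 / ((p i)⁻¹ - b) ^ 2
        + (p i)⁻¹ * xm1 + ((p i)⁻¹) ^ 2 * xm2 + ξ0 i)
    + a2 i * ((q i)⁻¹ - b) ^ n *
      Real.exp (x1 / ((q i)⁻¹ - b) + x2 / ((q i)⁻¹ - b) ^ 2
        + (q i)⁻¹ * xm1 + ((q i)⁻¹) ^ 2 * xm2 + η0 i)

/-- The Casoratian τ_n = det[(ψ_i^{(n+j-1)})]. -/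
noncomputable def tau {N : ℕ} (b : ℝ) (p q a1 a2 ξ0 η0 : Fin N → ℝ)
    (n : ℤ) : ℝ → ℝ → ℝ → ℝ → ℝ :=
  fun x1 x2 xm1 xm2 =>
    Matrix.det (Matrix.of fun i j : Fin N =>
      psi b p q a1 a2 ξ0 η0 i (n + (j : ℕ)) x1 x2 xm1 xm2)

/-! Each ψ_i solves the shift relation ∂_{x₋₁} ψ^{(m)} = ψ^{(m+1)} + b ψ^{(m)}, because
p⁻¹ (p⁻¹ - b)^m = (p⁻¹ - b)^{m+1} + b (p⁻¹ - b)^m. Differentiating the Casoratian column by column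
(multilinearity of the determinant), the b-parts add up to N b τ_n, and replacing column j by the
shifted column ψ^{(n+j+1)} produces a repeated column unless j is the last one. -/

open Matrix

section DetDeriv

variable {𝕜 : Type*} [NontriviallyNormedField 𝕜] {n : Type*} [Fintype n] [DecidableEq n]

noncomputable def Matrix.detRowContinuousMultilinear :
    ContinuousMultilinearMap 𝕜 (fun _ : n => n → 𝕜) 𝕜 :=
  ⟨detRowAlternating.toMultilinearMap, continuous_id.matrix_det⟩

theorem Matrix.hasDerivAt_det {A : 𝕜 → Matrix n n 𝕜} {A' : Matrix n n 𝕜} {t : 𝕜}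
    (hA : ∀ i j, HasDerivAt (fun s => A s i j) (A' i j) t) :
    HasDerivAt (fun s => (A s).det) (∑ j, ((A t).updateCol j fun i => A' i j).det) t := by
  have hcol : ∀ j, HasDerivAt (fun s i => A s i j) (fun i => A' i j) t := fun j =>
    hasDerivAt_pi.2 fun i => hA i j
  have h := (HasFDerivAt.multilinear_comp (f := detRowContinuousMultilinear)
    fun j => (hcol j).hasFDerivAt).hasDerivAt
  simp only [← det_transpose (A _), ← det_transpose (updateCol _ _ _), ← updateRow_transpose]
  refine h.congr_deriv ?_
  simp only [_root_.sum_apply, ContinuousLinearMap.comp_apply,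
    ContinuousLinearMap.toSpanSingleton_apply, one_smul,
    ContinuousMultilinearMap.toContinuousLinearMap_apply]
  rfl

end DetDeriv

theorem Matrix.det_updateCol_add_mul_self {R n : Type*} [CommRing R] [Fintype n] [DecidableEq n]
    (M : Matrix n n R) (j : n) (c : n → R) (b : R) :
    (M.updateCol j fun i => c i + b * M i j).det = (M.updateCol j c).det + b * M.det := by
  rw [← Pi.add_def, det_updateCol_add, show (fun i => b * M i j) = b • fun i => M i j from rfl,
    det_updateCol_smul, updateCol_eq_self]

theorem Matrix.sum_det_updateCol_shift {R : Type*} [CommRing R] {N : ℕ} (hN : 1 ≤ N)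
    (ψ : Fin N → ℤ → R) (n : ℤ) :
    ∑ j : Fin N, ((of fun i k : Fin N => ψ i (n + (k : ℕ))).updateCol j
        fun i => ψ i (n + (j : ℕ) + 1)).det
      = (of fun i j : Fin N => ψ i (if (j : ℕ) = N - 1 then n + (N : ℕ) else n + (j : ℕ))).det := by
  let last : Fin N := ⟨N - 1, by omega⟩
  rw [Finset.sum_eq_single last]
  · congr 1
    ext i k
    by_cases hk : k = last
    · subst hk
      simp only [updateCol_self, of_apply]
      congr 1
      push_cast [last]
      omega
    · have hk' : (k : ℕ) ≠ N - 1 := fun h => hk (Fin.ext h)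
      simp [updateCol_ne hk, hk']
  · intro j _ hj
    have hjN : (j : ℕ) + 1 < N := by
      have : (j : ℕ) ≠ N - 1 := fun h => hj (Fin.ext h)
      omega
    refine det_zero_of_column_eq (i := j) (j := ⟨j + 1, hjN⟩) (by simp [Fin.ext_iff]) fun i => ?_
    rw [updateCol_self, updateCol_ne (by simp [Fin.ext_iff])]
    simp only [of_apply]
    push_cast
    ring_nf
  · simp

theorem deriv_casoratian_det_sub {𝕜 : Type*} [NontriviallyNormedField 𝕜] {N : ℕ} (hN : 1 ≤ N)
    (b : 𝕜) (ψ : Fin N → ℤ → 𝕜 → 𝕜) (n : ℤ) (t : 𝕜)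
    (hψ : ∀ i m, HasDerivAt (ψ i m) (ψ i (m + 1) t + b * ψ i m t) t) :
    deriv (fun s => (of fun i j : Fin N => ψ i (n + (j : ℕ)) s).det) t
        - N * b * (of fun i j : Fin N => ψ i (n + (j : ℕ)) t).det
      = (of fun i j : Fin N =>
          ψ i (if (j : ℕ) = N - 1 then n + (N : ℕ) else n + (j : ℕ)) t).det := by
  rw [(hasDerivAt_det (A := fun s => of fun i j : Fin N => ψ i (n + (j : ℕ)) s)
    fun i j => hψ i _).deriv]
  have hsplit := fun j => det_updateCol_add_mul_self
    (of fun i k : Fin N => ψ i (n + (k : ℕ)) t) j (fun i => ψ i (n + (j : ℕ) + 1) t) b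
  simp only [of_apply] at hsplit
  simp only [hsplit, Finset.sum_add_distrib, sum_det_updateCol_shift hN (fun i m => ψ i m t),
    Finset.sum_const, Finset.card_univ, Fintype.card_fin, nsmul_eq_mul]
  ring

theorem hasDerivAt_zpow_mul_exp {e : ℝ → ℝ} {a b c x : ℝ} (m : ℤ) (hc : c ≠ b)
    (he : HasDerivAt e c x) :
    HasDerivAt (fun t => a * (c - b) ^ m * Real.exp (e t))
      (a * (c - b) ^ (m + 1) * Real.exp (e x) + b * (a * (c - b) ^ m * Real.exp (e x))) x := by
  refine (he.exp.const_mul _).congr_deriv ?_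
  rw [zpow_add_one₀ (sub_ne_zero.2 hc)]
  ring

theorem hasDerivAt_psi_xm1 {N : ℕ} (b : ℝ) (p q a1 a2 ξ0 η0 : Fin N → ℝ)
    (hpb : ∀ i, (p i)⁻¹ ≠ b) (hqb : ∀ i, (q i)⁻¹ ≠ b) (i : Fin N) (m : ℤ) (x1 x2 xm1 xm2 : ℝ) :
    HasDerivAt (fun t => psi b p q a1 a2 ξ0 η0 i m x1 x2 t xm2)
      (psi b p q a1 a2 ξ0 η0 i (m + 1) x1 x2 xm1 xm2
        + b * psi b p q a1 a2 ξ0 η0 i m x1 x2 xm1 xm2) xm1 := by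
  have hlin : ∀ c d d' d'' : ℝ, HasDerivAt (fun t => d + c * t + d' + d'') c xm1 :=
    fun c d d' d'' => by
    simpa using ((((hasDerivAt_id xm1).const_mul c).const_add d).add_const d').add_const d''
  refine ((hasDerivAt_zpow_mul_exp m (hpb i) (hlin _ _ _ _)).add
    (hasDerivAt_zpow_mul_exp m (hqb i) (hlin _ _ _ _))).congr_deriv ?_
  simp only [psi]
  ring

theorem tau_xm1_deriv_general {N : ℕ} (hN : 1 ≤ N) (b : ℝ)
    (p q a1 a2 ξ0 η0 : Fin N → ℝ)
    (hpb : ∀ i, (p i)⁻¹ ≠ b) (hqb : ∀ i, (q i)⁻¹ ≠ b) :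
    ∀ (n : ℤ) (x1 x2 xm1 xm2 : ℝ),
      pdm1 (tau b p q a1 a2 ξ0 η0 n) x1 x2 xm1 xm2
        - (N : ℝ) * b * tau b p q a1 a2 ξ0 η0 n x1 x2 xm1 xm2
      = Matrix.det (Matrix.of fun i j : Fin N =>
          psi b p q a1 a2 ξ0 η0 i
            (if (j : ℕ) = N - 1 then n + (N : ℕ) else n + (j : ℕ))
            x1 x2 xm1 xm2) := fun n x1 x2 xm1 xm2 =>
  deriv_casoratian_det_sub hN b (fun i m t => psi b p q a1 a2 ξ0 η0 i m x1 x2 t xm2) n xm1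
    fun i m => hasDerivAt_psi_xm1 b p q a1 a2 ξ0 η0 hpb hqb i m x1 x2 xm1 xm2

/-- (∂_{x₋₁} − Nb)τ_n = |n, n+1, …, n+N−2, n+N|. -/
theorem tau_xm1_deriv {N : ℕ} (hN : 1 ≤ N) (b : ℝ)
    (p q a1 a2 ξ0 η0 : Fin N → ℝ)
    (hp : ∀ i, p i ≠ 0) (hq : ∀ i, q i ≠ 0)
    (hpb : ∀ i, (p i)⁻¹ ≠ b) (hqb : ∀ i, (q i)⁻¹ ≠ b) :
    ∀ (n : ℤ) (x1 x2 xm1 xm2 : ℝ),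
      pdm1 (tau b p q a1 a2 ξ0 η0 n) x1 x2 xm1 xm2
        - (N : ℝ) * b * tau b p q a1 a2 ξ0 η0 n x1 x2 xm1 xm2
      = Matrix.det (Matrix.of fun i j : Fin N =>
          psi b p q a1 a2 ξ0 η0 i
            (if (j : ℕ) = N - 1 then n + (N : ℕ) else n + (j : ℕ))
            x1 x2 xm1 xm2) :=
  tau_xm1_deriv_general hN b p q a1 a2 ξ0 η0 hpb hqb
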